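/- arXiv:2507.16009 — 2 statements merged into one kernel-verified Lean document; each statement's English description precedes it below -/
import Mathlib

section
/- The family of 6-element subsets of Z/48 ∪ (Z/48)' obtained as the orbits, under simultaneous translation by Z/48 on both copies, of the base blocks [0,8,16,24,32,40], [0',8',16',24',32',40'], [0,1,3,13,28,0'], [0,4,11,17',36',38'], [0,5,19,1',24',42'], [0,9,26,4',7',40'], [0,6,8',9',18',22'], [0,18,11',28',33',39'] is a Steiner system S(2,6,96). -/
set_option maxRecDepth 3000

/-- The point set: two copies of Z/48. -/
abbrev PtsS2696 := ZMod 48 ⊕ ZMod 48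

/-- Translation by n on both copies of Z/48. -/
def trS2696 (n : ZMod 48) : PtsS2696 → PtsS2696
  | .inl a => .inl (a + n)
  | .inr a => .inr (a + n)

/-- First copy of Z/48 (unprimed points). -/
def u48 (a : ℕ) : PtsS2696 := .inl (a : ZMod 48)

/-- Second copy of Z/48 (primed points). -/
def p48 (a : ℕ) : PtsS2696 := .inr (a : ZMod 48)

/-- The eight base blocks of Mills' design. -/
def baseS2696 : Finset (Finset PtsS2696) :=
  { {u48 0, u48 8, u48 16, u48 24, u48 32, u48 40},
    {p48 0, p48 8, p48 16, p48 24, p48 32, p48 40},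
    {u48 0, u48 1, u48 3, u48 13, u48 28, p48 0},
    {u48 0, u48 4, u48 11, p48 17, p48 36, p48 38},
    {u48 0, u48 5, u48 19, p48 1, p48 24, p48 42},
    {u48 0, u48 9, u48 26, p48 4, p48 7, p48 40},
    {u48 0, u48 6, p48 8, p48 9, p48 18, p48 22},
    {u48 0, u48 18, p48 11, p48 28, p48 33, p48 39} }

/-- All translates of the base blocks. -/
def blocksS2696 : Finset (Finset PtsS2696) :=
  Finset.univ.biUnion (fun n : ZMod 48 => baseS2696.image (fun b => b.image (trS2696 n)))

/- ### Auxiliary definitions -/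

def bb0 : Finset PtsS2696 := {u48 0, u48 8, u48 16, u48 24, u48 32, u48 40}
def bb1 : Finset PtsS2696 := {p48 0, p48 8, p48 16, p48 24, p48 32, p48 40}
def bb2 : Finset PtsS2696 := {u48 0, u48 1, u48 3, u48 13, u48 28, p48 0}
def bb3 : Finset PtsS2696 := {u48 0, u48 4, u48 11, p48 17, p48 36, p48 38}
def bb4 : Finset PtsS2696 := {u48 0, u48 5, u48 19, p48 1, p48 24, p48 42}
def bb5 : Finset PtsS2696 := {u48 0, u48 9, u48 26, p48 4, p48 7, p48 40}
def bb6 : Finset PtsS2696 := {u48 0, u48 6, p48 8, p48 9, p48 18, p48 22}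
def bb7 : Finset PtsS2696 := {u48 0, u48 18, p48 11, p48 28, p48 33, p48 39}

/- ### Basic lemmas about the translation -/

lemma tr_tr (m n : ZMod 48) (x : PtsS2696) :
    trS2696 m (trS2696 n x) = trS2696 (n + m) x := by
  cases x <;> simp [trS2696, add_assoc]

lemma tr_zero (x : PtsS2696) : trS2696 0 x = x := by
  cases x <;> simp [trS2696]

lemma image_tr_zero (c : Finset PtsS2696) : c.image (trS2696 0) = c := by
  have : trS2696 0 = id := funext tr_zero
  rw [this, Finset.image_id]

lemma image_image_tr (c : Finset PtsS2696) (n m : ZMod 48) :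
    (c.image (trS2696 n)).image (trS2696 m) = c.image (trS2696 (n + m)) := by
  rw [Finset.image_image]
  exact Finset.image_congr (fun x _ => tr_tr m n x)

lemma mem_blocks_iff {b : Finset PtsS2696} :
    b ∈ blocksS2696 ↔ ∃ n : ZMod 48, ∃ c ∈ baseS2696, c.image (trS2696 n) = b := by
  simp [blocksS2696]

lemma image_tr_mem {c : Finset PtsS2696} (hc : c ∈ baseS2696) (n : ZMod 48) :
    c.image (trS2696 n) ∈ blocksS2696 :=
  mem_blocks_iff.mpr ⟨n, c, hc, rfl⟩

lemma blocks_tr_closed {b : Finset PtsS2696} (hb : b ∈ blocksS2696) (m : ZMod 48) :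
    b.image (trS2696 m) ∈ blocksS2696 := by
  obtain ⟨n, c, hc, rfl⟩ := mem_blocks_iff.mp hb
  rw [image_image_tr]
  exact image_tr_mem hc _

/- ### Block cardinalities -/

set_option maxHeartbeats 20000000 in
lemma base_card : ∀ c ∈ baseS2696, c.card = 6 := by
  intro c hc
  simp only [baseS2696, Finset.mem_insert, Finset.mem_singleton] at hc
  rcases hc with rfl|rfl|rfl|rfl|rfl|rfl|rfl|rfl <;> decide

lemma tr_inj (n : ZMod 48) : Function.Injective (trS2696 n) := by
  intro x y h
  have := congrArg (trS2696 (-n)) h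
  rwa [tr_tr, tr_tr, add_neg_cancel, tr_zero, tr_zero] at this

lemma block_card : ∀ b ∈ blocksS2696, b.card = 6 := by
  intro b hb
  obtain ⟨n, c, hc, rfl⟩ := mem_blocks_iff.mp hb
  rw [Finset.card_image_of_injective _ (tr_inj n)]
  exact base_card c hc

/- ### Counting the blocks -/

lemma B_eq : blocksS2696 =
    baseS2696.biUnion (fun c => Finset.univ.image (fun n => c.image (trS2696 n))) := by
  ext b
  simp only [blocksS2696, Finset.mem_biUnion, Finset.mem_image, Finset.mem_univ, true_and]
  constructor
  · rintro ⟨n, c, hc, rfl⟩; exact ⟨c, hc, n, rfl⟩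
  · rintro ⟨c, hc, n, rfl⟩; exact ⟨n, c, hc, rfl⟩

set_option maxHeartbeats 80000000 in
lemma key_translate : ∀ c1 ∈ baseS2696, ∀ c2 ∈ baseS2696, ∀ k : ZMod 48,
    c1.image (trS2696 k) = c2 → c1 = c2 := by
  intro c1 hc1 c2 hc2
  simp only [baseS2696, Finset.mem_insert, Finset.mem_singleton] at hc1 hc2
  rcases hc1 with rfl|rfl|rfl|rfl|rfl|rfl|rfl|rfl <;>
    rcases hc2 with rfl|rfl|rfl|rfl|rfl|rfl|rfl|rfl <;> decide

lemma orbit_disj : ∀ c1 ∈ baseS2696, ∀ c2 ∈ baseS2696, c1 ≠ c2 →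
    Disjoint (Finset.univ.image (fun n => c1.image (trS2696 n)))
             (Finset.univ.image (fun n => c2.image (trS2696 n))) := by
  intro c1 hc1 c2 hc2 hne
  rw [Finset.disjoint_left]
  rintro b hb1 hb2
  obtain ⟨n, -, rfl⟩ := Finset.mem_image.mp hb1
  obtain ⟨m, -, hm⟩ := Finset.mem_image.mp hb2
  have h2 : (Finset.image (trS2696 n) c1).image (trS2696 (-m)) = c2 := by
    rw [← hm, image_image_tr, add_neg_cancel, image_tr_zero]
  rw [image_image_tr] at h2
  exact hne (key_translate c1 hc1 c2 hc2 _ h2)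

def S8 : Finset (ZMod 48) := {0, 1, 2, 3, 4, 5, 6, 7}

lemma orbit_card_of {c : Finset PtsS2696} (S : Finset (ZMod 48)) (k : ℕ)
    (hcover : ∀ n : ZMod 48, ∃ s ∈ S, c.image (trS2696 n) = c.image (trS2696 s))
    (hinj : ∀ s ∈ S, ∀ t ∈ S, c.image (trS2696 s) = c.image (trS2696 t) → s = t)
    (hcard : S.card = k) :
    (Finset.univ.image (fun n => c.image (trS2696 n))).card = k := by
  have him : Finset.univ.image (fun n => c.image (trS2696 n))
      = S.image (fun n => c.image (trS2696 n)) := by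
    apply Finset.Subset.antisymm
    · intro b hb
      obtain ⟨n, -, rfl⟩ := Finset.mem_image.mp hb
      obtain ⟨s, hs, he⟩ := hcover n
      exact Finset.mem_image.mpr ⟨s, hs, he.symm⟩
    · exact Finset.image_subset_image (Finset.subset_univ S)
  rw [him, Finset.card_image_of_injOn (fun s hs t ht h => hinj s hs t ht h), hcard]

lemma card_univ48 : (Finset.univ : Finset (ZMod 48)).card = 48 := by
  rw [Finset.card_univ]; rfl

set_option maxHeartbeats 20000000 in
lemma orbit_card0 : (Finset.univ.image (fun n => bb0.image (trS2696 n))).card = 8 :=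
  orbit_card_of S8 8 (by decide) (by decide) (by decide)

set_option maxHeartbeats 20000000 in
lemma orbit_card1 : (Finset.univ.image (fun n => bb1.image (trS2696 n))).card = 8 :=
  orbit_card_of S8 8 (by decide) (by decide) (by decide)

set_option maxHeartbeats 80000000 in
lemma inj2 : ∀ s t : ZMod 48, bb2.image (trS2696 s) = bb2.image (trS2696 t) → s = t := by decide
set_option maxHeartbeats 80000000 in
lemma inj3 : ∀ s t : ZMod 48, bb3.image (trS2696 s) = bb3.image (trS2696 t) → s = t := by decide
set_option maxHeartbeats 80000000 in
lemma inj4 : ∀ s t : ZMod 48, bb4.image (trS2696 s) = bb4.image (trS2696 t) → s = t := by decide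
set_option maxHeartbeats 80000000 in
lemma inj5 : ∀ s t : ZMod 48, bb5.image (trS2696 s) = bb5.image (trS2696 t) → s = t := by decide
set_option maxHeartbeats 80000000 in
lemma inj6 : ∀ s t : ZMod 48, bb6.image (trS2696 s) = bb6.image (trS2696 t) → s = t := by decide
set_option maxHeartbeats 80000000 in
lemma inj7 : ∀ s t : ZMod 48, bb7.image (trS2696 s) = bb7.image (trS2696 t) → s = t := by decide

lemma orbit_card_long {c : Finset PtsS2696}
    (hinj : ∀ s t : ZMod 48, c.image (trS2696 s) = c.image (trS2696 t) → s = t) :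
    (Finset.univ.image (fun n => c.image (trS2696 n))).card = 48 :=
  orbit_card_of Finset.univ 48 (fun n => ⟨n, Finset.mem_univ n, rfl⟩)
    (fun s _ t _ h => hinj s t h) card_univ48

set_option maxHeartbeats 20000000 in
lemma card_blocks : blocksS2696.card = 304 := by
  rw [B_eq, Finset.card_biUnion orbit_disj]
  show ∑ c ∈ ({bb0, bb1, bb2, bb3, bb4, bb5, bb6, bb7} : Finset (Finset PtsS2696)),
      (Finset.univ.image (fun n => c.image (trS2696 n))).card = 304
  rw [Finset.sum_insert (by simp only [Finset.mem_insert, Finset.mem_singleton]; decide),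
    Finset.sum_insert (by simp only [Finset.mem_insert, Finset.mem_singleton]; decide),
    Finset.sum_insert (by simp only [Finset.mem_insert, Finset.mem_singleton]; decide),
    Finset.sum_insert (by simp only [Finset.mem_insert, Finset.mem_singleton]; decide),
    Finset.sum_insert (by simp only [Finset.mem_insert, Finset.mem_singleton]; decide),
    Finset.sum_insert (by simp only [Finset.mem_insert, Finset.mem_singleton]; decide),
    Finset.sum_insert (by simp only [Finset.mem_singleton]; decide),
    Finset.sum_singleton,
    orbit_card0, orbit_card1, orbit_card_long inj2, orbit_card_long inj3,
    orbit_card_long inj4, orbit_card_long inj5, orbit_card_long inj6, orbit_card_long inj7]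
  norm_num

/- ### Existence of a covering block -/

def wit0 : List (ZMod 48 × Finset PtsS2696) :=
  [((0 : ZMod 48), bb0), ((0 : ZMod 48), bb2), ((0 : ZMod 48), bb3), ((0 : ZMod 48), bb4),
   ((0 : ZMod 48), bb5), ((0 : ZMod 48), bb6), ((0 : ZMod 48), bb7), ((8 : ZMod 48), bb0),
   ((16 : ZMod 48), bb0), ((20 : ZMod 48), bb2), ((22 : ZMod 48), bb5), ((24 : ZMod 48), bb0),
   ((29 : ZMod 48), bb4), ((30 : ZMod 48), bb7), ((32 : ZMod 48), bb0), ((35 : ZMod 48), bb2),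
   ((37 : ZMod 48), bb3), ((39 : ZMod 48), bb5), ((40 : ZMod 48), bb0), ((42 : ZMod 48), bb6),
   ((43 : ZMod 48), bb4), ((44 : ZMod 48), bb3), ((45 : ZMod 48), bb2), ((47 : ZMod 48), bb2)]

def wit1 : List (ZMod 48 × Finset PtsS2696) :=
  [((0 : ZMod 48), bb1), ((0 : ZMod 48), bb2), ((6 : ZMod 48), bb4), ((8 : ZMod 48), bb1),
   ((8 : ZMod 48), bb5), ((9 : ZMod 48), bb7), ((10 : ZMod 48), bb3), ((12 : ZMod 48), bb3),
   ((15 : ZMod 48), bb7), ((16 : ZMod 48), bb1), ((20 : ZMod 48), bb7), ((24 : ZMod 48), bb1),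
   ((24 : ZMod 48), bb4), ((26 : ZMod 48), bb6), ((30 : ZMod 48), bb6), ((31 : ZMod 48), bb3),
   ((32 : ZMod 48), bb1), ((37 : ZMod 48), bb7), ((39 : ZMod 48), bb6), ((40 : ZMod 48), bb1),
   ((40 : ZMod 48), bb6), ((41 : ZMod 48), bb5), ((44 : ZMod 48), bb5), ((47 : ZMod 48), bb4)]

lemma membb0 : bb0 ∈ baseS2696 := by
  simp only [baseS2696, Finset.mem_insert, Finset.mem_singleton]
  exact Or.inl rfl
lemma membb1 : bb1 ∈ baseS2696 := by
  simp only [baseS2696, Finset.mem_insert, Finset.mem_singleton]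
  exact Or.inr (Or.inl rfl)
lemma membb2 : bb2 ∈ baseS2696 := by
  simp only [baseS2696, Finset.mem_insert, Finset.mem_singleton]
  exact Or.inr (Or.inr (Or.inl rfl))
lemma membb3 : bb3 ∈ baseS2696 := by
  simp only [baseS2696, Finset.mem_insert, Finset.mem_singleton]
  exact Or.inr (Or.inr (Or.inr (Or.inl rfl)))
lemma membb4 : bb4 ∈ baseS2696 := by
  simp only [baseS2696, Finset.mem_insert, Finset.mem_singleton]
  exact Or.inr (Or.inr (Or.inr (Or.inr (Or.inl rfl))))
lemma membb5 : bb5 ∈ baseS2696 := by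
  simp only [baseS2696, Finset.mem_insert, Finset.mem_singleton]
  exact Or.inr (Or.inr (Or.inr (Or.inr (Or.inr (Or.inl rfl)))))
lemma membb6 : bb6 ∈ baseS2696 := by
  simp only [baseS2696, Finset.mem_insert, Finset.mem_singleton]
  exact Or.inr (Or.inr (Or.inr (Or.inr (Or.inr (Or.inr (Or.inl rfl))))))
lemma membb7 : bb7 ∈ baseS2696 := by
  simp only [baseS2696, Finset.mem_insert, Finset.mem_singleton]
  exact Or.inr (Or.inr (Or.inr (Or.inr (Or.inr (Or.inr (Or.inr (rfl)))))))

lemma wit0_base : ∀ w ∈ wit0, w.2 ∈ baseS2696 := by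
  intro w hw
  fin_cases hw <;>
    first
      | exact membb0 | exact membb1 | exact membb2 | exact membb3
      | exact membb4 | exact membb5 | exact membb6 | exact membb7

lemma wit1_base : ∀ w ∈ wit1, w.2 ∈ baseS2696 := by
  intro w hw
  fin_cases hw <;>
    first
      | exact membb0 | exact membb1 | exact membb2 | exact membb3
      | exact membb4 | exact membb5 | exact membb6 | exact membb7

set_option maxHeartbeats 20000000 in
lemma cov0 : ∀ q : PtsS2696, q ≠ u48 0 →
    ∃ w ∈ wit0, u48 0 ∈ w.2.image (trS2696 w.1) ∧ q ∈ w.2.image (trS2696 w.1) := by decide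

set_option maxHeartbeats 20000000 in
lemma cov1 : ∀ q : PtsS2696, q ≠ p48 0 →
    ∃ w ∈ wit1, p48 0 ∈ w.2.image (trS2696 w.1) ∧ q ∈ w.2.image (trS2696 w.1) := by decide

lemma exists_block0 {q : PtsS2696} (hq : q ≠ u48 0) :
    ∃ b ∈ blocksS2696, u48 0 ∈ b ∧ q ∈ b := by
  obtain ⟨w, hw, h0, hq'⟩ := cov0 q hq
  exact ⟨_, image_tr_mem (wit0_base w hw) w.1, h0, hq'⟩

lemma exists_block1 {q : PtsS2696} (hq : q ≠ p48 0) :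
    ∃ b ∈ blocksS2696, p48 0 ∈ b ∧ q ∈ b := by
  obtain ⟨w, hw, h0, hq'⟩ := cov1 q hq
  exact ⟨_, image_tr_mem (wit1_base w hw) w.1, h0, hq'⟩

lemma tr_base0 (a : ZMod 48) : trS2696 a (u48 0) = Sum.inl a := by
  simp [trS2696, u48]

lemma tr_base1 (a : ZMod 48) : trS2696 a (p48 0) = Sum.inr a := by
  simp [trS2696, p48]

lemma exists_block : ∀ p q : PtsS2696, p ≠ q → ∃ b ∈ blocksS2696, p ∈ b ∧ q ∈ b := by
  have main : ∀ (p₀ : PtsS2696)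
      (h₀ : ∀ {q : PtsS2696}, q ≠ p₀ → ∃ b ∈ blocksS2696, p₀ ∈ b ∧ q ∈ b)
      (a : ZMod 48) (q : PtsS2696), trS2696 a p₀ ≠ q →
      ∃ b ∈ blocksS2696, trS2696 a p₀ ∈ b ∧ q ∈ b := by
    intro p₀ h₀ a q hne
    have hq' : trS2696 (-a) q ≠ p₀ := by
      intro h
      apply hne
      have := congrArg (trS2696 a) h
      rwa [tr_tr, neg_add_cancel, tr_zero, eq_comm] at this
    obtain ⟨b, hb, h0b, hqb⟩ := h₀ hq'
    refine ⟨b.image (trS2696 a), blocks_tr_closed hb a, Finset.mem_image_of_mem _ h0b, ?_⟩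
    have : trS2696 a (trS2696 (-a) q) = q := by
      rw [tr_tr, neg_add_cancel, tr_zero]
    exact this ▸ Finset.mem_image_of_mem _ hqb
  intro p q hpq
  cases p with
  | inl a =>
      have := main (u48 0) (fun {q} hq => exists_block0 hq) a q
      rw [tr_base0] at this
      exact this hpq
  | inr a =>
      have := main (p48 0) (fun {q} hq => exists_block1 hq) a q
      rw [tr_base1] at this
      exact this hpq

/- ### Double counting -/

lemma card_pts : Fintype.card PtsS2696 = 96 := by
  simp [ZMod.card]

lemma sum_all_one {α : Type*} [DecidableEq α] (s : Finset α) (f : α → ℕ)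
    (h1 : ∀ i ∈ s, 1 ≤ f i) (h2 : ∑ i ∈ s, f i = s.card) : ∀ i ∈ s, f i = 1 := by
  by_contra h
  push_neg at h
  obtain ⟨i, hi, hne⟩ := h
  have hlt : 1 < f i := lt_of_le_of_ne (h1 i hi) (Ne.symm hne)
  have : ∑ j ∈ s, (1 : ℕ) < ∑ j ∈ s, f j :=
    Finset.sum_lt_sum h1 ⟨i, hi, hlt⟩
  rw [h2, Finset.sum_const, smul_eq_mul, mul_one] at this
  exact lt_irrefl _ this

lemma fiber_card_one : ∀ p q : PtsS2696, p ≠ q →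
    (blocksS2696.filter (fun b => p ∈ b ∧ q ∈ b)).card = 1 := by
  classical
  set T := (Finset.univ : Finset PtsS2696).offDiag with hT
  have hTcard : T.card = 9120 := by
    rw [hT, Finset.offDiag_card, Finset.card_univ, card_pts]
  -- the double counting identity
  have hswap : ∑ e ∈ T, (blocksS2696.filter (fun b => e.1 ∈ b ∧ e.2 ∈ b)).card
      = ∑ b ∈ blocksS2696, (T.filter (fun e => e.1 ∈ b ∧ e.2 ∈ b)).card := by
    simp_rw [Finset.card_filter]
    exact Finset.sum_comm
  have hfilter : ∀ b ∈ blocksS2696,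
      (T.filter (fun e => e.1 ∈ b ∧ e.2 ∈ b)) = b.offDiag := by
    intro b _
    ext ⟨x, y⟩
    simp only [Finset.mem_filter, hT, Finset.mem_offDiag, Finset.mem_univ, true_and]
    exact ⟨fun h => ⟨h.2.1, h.2.2, h.1⟩, fun h => ⟨h.2.2, h.1, h.2.1⟩⟩
  have hsum : ∑ e ∈ T, (blocksS2696.filter (fun b => e.1 ∈ b ∧ e.2 ∈ b)).card = 9120 := by
    rw [hswap, Finset.sum_congr rfl (fun b hb => by rw [hfilter b hb, Finset.offDiag_card,
      block_card b hb])]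
    rw [Finset.sum_const, card_blocks]
    norm_num
  have hge : ∀ e ∈ T, 1 ≤ (blocksS2696.filter (fun b => e.1 ∈ b ∧ e.2 ∈ b)).card := by
    rintro ⟨p, q⟩ he
    rw [hT, Finset.mem_offDiag] at he
    obtain ⟨b, hb, hpb, hqb⟩ := exists_block p q he.2.2
    exact Finset.card_pos.mpr ⟨b, Finset.mem_filter.mpr ⟨hb, hpb, hqb⟩⟩
  have := sum_all_one T _ hge (by rw [hsum, hTcard])
  intro p q hpq
  exact this (p, q) (by rw [hT, Finset.mem_offDiag]; exact ⟨Finset.mem_univ _, Finset.mem_univ _, hpq⟩)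

/-- The translates of the eight base blocks form a Steiner system S(2,6,96). -/
theorem blocksS2696_is_steiner :
    Fintype.card PtsS2696 = 96 ∧
    (∀ b ∈ blocksS2696, b.card = 6) ∧
    (∀ p q : PtsS2696, p ≠ q → ∃! b, b ∈ blocksS2696 ∧ p ∈ b ∧ q ∈ b) := by
  refine ⟨card_pts, block_card, ?_⟩
  intro p q hpq
  have h1 := fiber_card_one p q hpq
  obtain ⟨b, hb⟩ := Finset.card_eq_one.mp h1
  have hbmem : b ∈ blocksS2696.filter (fun c => p ∈ c ∧ q ∈ c) := by
    rw [hb]; exact Finset.mem_singleton_self b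
  rw [Finset.mem_filter] at hbmem
  refine ⟨b, ⟨hbmem.1, hbmem.2⟩, ?_⟩
  rintro b' ⟨hb', hpb', hqb'⟩
  have : b' ∈ blocksS2696.filter (fun c => p ∈ c ∧ q ∈ c) :=
    Finset.mem_filter.mpr ⟨hb', hpb', hqb'⟩
  rw [hb, Finset.mem_singleton] at this
  exact this
end

section
/- The family of 6-element subsets of Z/53 ∪ (Z/53)' obtained as the full translation orbits under Z/53 of the base blocks [0,1,3,11,38,0'], [0,4,28',30',37',47'], [0,5,19,25,36',39'], [0,7,29,8',16',48'], [0,9,21,12',13',27'], [0,13,30,23',35',51'], [0,2',7',25',29',49'] is a Steiner system S(2,6,106). -/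
/-
Translation by `n : Z/53` permutes the blocks and preserves the number of them through a pair of
points, and every point is a translate of `0` or `0'`. So it suffices to check, by computation,
that each pair `{0, x}` and `{0', x}` lies in exactly one translate `g + B` of a base block `B`.
-/

/-- The point set: two copies of Z/53. -/
abbrev PtsS26106 := ZMod 53 ⊕ ZMod 53

/-- Translation by n on both copies of Z/53. -/
def trS26106 (n : ZMod 53) : PtsS26106 → PtsS26106
  | .inl a => .inl (a + n)
  | .inr a => .inr (a + n)

/-- First copy of Z/53 (unprimed points). -/
def u53 (a : ℕ) : PtsS26106 := .inl (a : ZMod 53)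

/-- Second copy of Z/53 (primed points). -/
def p53 (a : ℕ) : PtsS26106 := .inr (a : ZMod 53)

/-- The seven base blocks of Mills' design. -/
def baseS26106 : Finset (Finset PtsS26106) :=
  { {u53 0, u53 1, u53 3, u53 11, u53 38, p53 0},
    {u53 0, u53 4, p53 28, p53 30, p53 37, p53 47},
    {u53 0, u53 5, u53 19, u53 25, p53 36, p53 39},
    {u53 0, u53 7, u53 29, p53 8, p53 16, p53 48},
    {u53 0, u53 9, u53 21, p53 12, p53 13, p53 27},
    {u53 0, u53 13, u53 30, p53 23, p53 35, p53 51},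
    {u53 0, p53 2, p53 7, p53 25, p53 29, p53 49} }

/-- All translates of the base blocks. -/
def blocksS26106 : Finset (Finset PtsS26106) :=
  Finset.univ.biUnion (fun n : ZMod 53 => baseS26106.image (fun b => b.image (trS26106 n)))

open Finset
open scoped Pointwise

section Translates

variable (G : Type*) {X : Type*} [Fintype G] [VAdd G X] [DecidableEq X]

def translates (D : Finset (Finset X)) : Finset (Finset X) :=
  univ.biUnion fun g : G => D.image (g +ᵥ ·)

def pairCount (D : Finset (Finset X)) (p q : X) : ℕ :=
  #{gb ∈ (univ : Finset G) ×ˢ D | p ∈ gb.1 +ᵥ gb.2 ∧ q ∈ gb.1 +ᵥ gb.2}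

variable {G} {D : Finset (Finset X)}

lemma mem_translates {c : Finset X} : c ∈ translates G D ↔ ∃ g : G, ∃ b ∈ D, g +ᵥ b = c := by
  simp [translates]

lemma existsUnique_mem_translates_of_pairCount_eq_one {p q : X} (h : pairCount G D p q = 1) :
    ∃! c, c ∈ translates G D ∧ p ∈ c ∧ q ∈ c := by
  obtain ⟨⟨g, b⟩, hgb⟩ := card_eq_one.mp h
  have eq_of_mem : ∀ (g' : G) (b' : Finset X), b' ∈ D → p ∈ g' +ᵥ b' → q ∈ g' +ᵥ b' →
      (g', b') = (g, b) := by
    intro g' b' hb' hp hq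
    rw [← mem_singleton, ← hgb]
    simp [hb', hp, hq]
  have hb : b ∈ D ∧ p ∈ g +ᵥ b ∧ q ∈ g +ᵥ b := by
    simpa using hgb.symm.subset (mem_singleton_self (g, b))
  refine ⟨g +ᵥ b, ⟨mem_translates.mpr ⟨g, b, hb.1, rfl⟩, hb.2⟩, ?_⟩
  rintro c ⟨hc, hp, hq⟩
  obtain ⟨g', b', hb', rfl⟩ := mem_translates.mp hc
  obtain ⟨rfl, rfl⟩ := Prod.ext_iff.mp (eq_of_mem g' b' hb' hp hq)
  rfl

end Translates

section AddAction

variable {G X : Type*} [AddGroup G] [Fintype G] [AddAction G X] [DecidableEq X]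
  {D : Finset (Finset X)}

lemma card_of_mem_translates {k : ℕ} (hD : ∀ b ∈ D, #b = k) {c : Finset X}
    (hc : c ∈ translates G D) : #c = k := by
  obtain ⟨g, b, hb, rfl⟩ := mem_translates.mp hc
  rw [card_vadd_finset, hD b hb]

lemma pairCount_vadd (g : G) (p q : X) :
    pairCount G D (g +ᵥ p) (g +ᵥ q) = pairCount G D p q := by
  have vadd_mem_iff : ∀ (h : G) (b : Finset X) (x : X), g +ᵥ x ∈ h +ᵥ b ↔ x ∈ (-g + h) +ᵥ b := by
    intro h b x
    rw [← Finset.neg_vadd_mem_iff, ← Finset.neg_vadd_mem_iff, vadd_vadd, neg_add_rev, neg_neg]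
  refine card_nbij' (fun gb => (-g + gb.1, gb.2)) (fun gb => (g + gb.1, gb.2)) ?_ ?_ ?_ ?_
  · intro gb hgb
    simpa [vadd_mem_iff] using hgb
  · intro gb hgb
    simpa [vadd_mem_iff] using hgb
  · intro gb _
    simp
  · intro gb _
    simp

lemma pairCount_eq_one_of_forall_vadd_mem {S : Finset X} (hS : ∀ x : X, ∃ g : G, g +ᵥ x ∈ S)
    (h : ∀ s ∈ S, ∀ x, x ≠ s → pairCount G D s x = 1) {p q : X} (hpq : p ≠ q) :
    pairCount G D p q = 1 := by
  obtain ⟨g, hg⟩ := hS p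
  rw [← pairCount_vadd g]
  exact h _ hg _ ((AddAction.injective g).ne hpq.symm)

end AddAction

lemma trS26106_eq_vadd (n : ZMod 53) : trS26106 n = (n +ᵥ ·) := by
  ext (x | x) <;> simp [trS26106, add_comm]

lemma blocksS26106_eq_translates : blocksS26106 = translates (ZMod 53) baseS26106 := by
  simp only [blocksS26106, translates, trS26106_eq_vadd, image_vadd]

lemma card_of_mem_baseS26106 : ∀ b ∈ baseS26106, #b = 6 := by
  simp only [baseS26106, mem_insert, mem_singleton, forall_eq_or_imp, forall_eq]
  decide

lemma exists_vadd_mem_zeros (x : PtsS26106) :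
    ∃ n : ZMod 53, n +ᵥ x ∈ ({u53 0, p53 0} : Finset _) := by
  rcases x with a | a
  · exact ⟨-a, by simp [u53]⟩
  · exact ⟨-a, by simp [p53]⟩

set_option maxRecDepth 100000 in
lemma pairCount_zeros : ∀ s ∈ ({u53 0, p53 0} : Finset _), ∀ x, x ≠ s →
    pairCount (ZMod 53) baseS26106 s x = 1 := by
  decide

/-- The translates of the seven base blocks form a Steiner system S(2,6,106). -/
theorem blocksS26106_is_steiner :
    Fintype.card PtsS26106 = 106 ∧
    (∀ b ∈ blocksS26106, b.card = 6) ∧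
    (∀ p q : PtsS26106, p ≠ q → ∃! b, b ∈ blocksS26106 ∧ p ∈ b ∧ q ∈ b) := by
  rw [blocksS26106_eq_translates]
  refine ⟨by simp, fun b => card_of_mem_translates card_of_mem_baseS26106, fun p q hpq => ?_⟩
  exact existsUnique_mem_translates_of_pairCount_eq_one
    (pairCount_eq_one_of_forall_vadd_mem exists_vadd_mem_zeros pairCount_zeros hpq)
end
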